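/- arXiv:2502.07448 — 6 statements merged into one kernel-verified Lean document; each statement's English description precedes it below -/
import Mathlib

section
/- For all nonzero real x, 1/(2(1 + |x|)) ≤ (cosh(x) - 1)/(x·sinh(x)) ≤ 1/2. -/
/-!
Writing `cosh x - 1 = 2 sinh² (x/2)` and `sinh x = 2 sinh (x/2) cosh (x/2)`, the quotient is
`tanh (x/2) / x`, an even function of `x`. For `t ≥ 0` the mean value theorem gives
`tanh t ≤ t`, which is the upper bound, and `exp (2t) ≥ 1 + 2t` gives `tanh t ≥ t / (1 + 2t)`,
which is the lower bound.
-/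

open Real

namespace Real

lemma sinh_le_mul_cosh {t : ℝ} (ht : 0 ≤ t) : sinh t ≤ t * cosh t := by
  have h := (convex_Icc 0 t).image_sub_le_mul_sub_of_deriv_le continuous_sinh.continuousOn
    differentiable_sinh.differentiableOn (C := cosh t) (fun s hs => ?_) 0 ⟨le_rfl, ht⟩ t
    ⟨ht, le_rfl⟩ ht
  · simpa [mul_comm] using h
  · rw [interior_Icc] at hs
    rw [deriv_sinh, cosh_le_cosh, abs_of_pos hs.1, abs_of_nonneg ht]
    exact hs.2.le

lemma tanh_le_self {t : ℝ} (ht : 0 ≤ t) : tanh t ≤ t := by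
  rw [tanh_eq_sinh_div_cosh, div_le_iff₀ (cosh_pos t)]
  exact sinh_le_mul_cosh ht

lemma mul_cosh_le_one_add_two_mul_mul_sinh {t : ℝ} (ht : 0 ≤ t) :
    t * cosh t ≤ (1 + 2 * t) * sinh t := by
  have hexp : 1 + 2 * t ≤ exp t * exp t := by
    rw [← exp_add, ← two_mul]; linarith [add_one_le_exp (2 * t)]
  have key : (1 + 3 * t) * exp (-t) ≤ (1 + t) * exp t :=
    calc (1 + 3 * t) * exp (-t) ≤ (1 + t) * (exp t * exp t) * exp (-t) := by
          gcongr; nlinarith [mul_le_mul_of_nonneg_left hexp (by positivity : 0 ≤ 1 + t)]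
      _ = (1 + t) * exp t := by
          rw [mul_assoc, mul_assoc, ← exp_add, add_neg_cancel, exp_zero, mul_one]
  rw [cosh_eq, sinh_eq]
  linarith

lemma div_one_add_two_mul_le_tanh {t : ℝ} (ht : 0 ≤ t) : t / (1 + 2 * t) ≤ tanh t := by
  rw [tanh_eq_sinh_div_cosh, div_le_div_iff₀ (by positivity) (cosh_pos t), mul_comm (sinh t)]
  exact mul_cosh_le_one_add_two_mul_mul_sinh ht

lemma cosh_sub_one_div_mul_sinh (x : ℝ) :
    (cosh x - 1) / (x * sinh x) = tanh (x / 2) / x := by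
  have hx : x = 2 * (x / 2) := by ring
  have hcosh : cosh x - 1 = 2 * sinh (x / 2) * sinh (x / 2) := by
    rw [hx, cosh_two_mul, cosh_sq, ← hx]; ring
  have hsinh : x * sinh x = 2 * sinh (x / 2) * (x * cosh (x / 2)) := by
    rw [hx, sinh_two_mul, ← hx]; ring
  rcases eq_or_ne (sinh (x / 2)) 0 with hs | hs
  · simp [hcosh, hsinh, tanh_eq_sinh_div_cosh, hs]
  · rw [hcosh, hsinh, mul_div_mul_left _ _ (mul_ne_zero two_ne_zero hs),
      tanh_eq_sinh_div_cosh, div_div, mul_comm x]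

lemma tanh_half_div_self_eq_abs (x : ℝ) : tanh (x / 2) / x = tanh (|x| / 2) / |x| := by
  rcases abs_choice x with h | h <;> simp [h, neg_div, tanh_neg, div_neg]

end Real

theorem cosh_sinh_ratio_bounds (x : ℝ) (hx : x ≠ 0) :
    1 / (2 * (1 + |x|)) ≤ (Real.cosh x - 1) / (x * Real.sinh x) ∧
      (Real.cosh x - 1) / (x * Real.sinh x) ≤ 1 / 2 := by
  have hpos : 0 < |x| := abs_pos.2 hx
  have hhalf : 0 ≤ |x| / 2 := by positivity
  rw [cosh_sub_one_div_mul_sinh, tanh_half_div_self_eq_abs]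
  constructor
  · rw [le_div_iff₀ hpos]
    calc 1 / (2 * (1 + |x|)) * |x| = |x| / 2 / (1 + 2 * (|x| / 2)) := by field_simp
      _ ≤ tanh (|x| / 2) := div_one_add_two_mul_le_tanh hhalf
  · rw [div_le_iff₀ hpos]
    linarith [tanh_le_self hhalf]
end

section
/- For every real α with |α| < π/2, the integral of e^{αx} with respect to the probability measure ν(dx) = dx/(2·cosh(πx/2)) on the real line equals 1/cos(α). -/
open Real MeasureTheory Set

/-!
Substituting `u = sigmoid (π x)` turns the integral into the Beta
integral `B(s, 1 - s)` with `s = α / π + 1 / 2`, and Euler's reflection formula gives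
`B(s, 1 - s) = Γ(s) Γ(1 - s) = π / sin (π s) = π / cos α`.
-/

theorem integral_Ioo_rpow_mul_one_sub_rpow_neg {s : ℝ} (hs₀ : 0 < s) (hs₁ : s < 1) :
    ∫ u in Ioo (0 : ℝ) 1, u ^ (s - 1) * (1 - u) ^ (-s) = π / sin (π * s) := by
  have hbeta : ((∫ u in Ioo (0 : ℝ) 1, u ^ (s - 1) * (1 - u) ^ (-s) : ℝ) : ℂ) =
      Complex.betaIntegral s (1 - s) := by
    rw [← integral_Ioc_eq_integral_Ioo, ← intervalIntegral.integral_of_le zero_le_one,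
      Complex.betaIntegral, ← intervalIntegral.integral_ofReal]
    refine intervalIntegral.integral_congr fun u hu => ?_
    rw [uIcc_of_le zero_le_one] at hu
    simp only [Complex.ofReal_mul, sub_sub_cancel_left]
    rw [Complex.ofReal_cpow hu.1, Complex.ofReal_cpow (sub_nonneg.2 hu.2)]
    push_cast
    ring_nf
  have hreflection : Complex.betaIntegral s (1 - s) = π / Complex.sin (π * s) := by
    rw [← Complex.Gamma_mul_Gamma_one_sub, Complex.Gamma_mul_Gamma_eq_betaIntegral
      (by simpa using hs₀) (by simpa using hs₁), add_sub_cancel, Complex.Gamma_one, one_mul]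
  exact_mod_cast hbeta.trans hreflection

theorem setIntegral_Ioo_zero_one_eq_integral_sigmoid {E : Type*} [NormedAddCommGroup E]
    [NormedSpace ℝ E] (f : ℝ → E) :
    ∫ u in Ioo (0 : ℝ) 1, f u = ∫ y, (sigmoid y * (1 - sigmoid y)) • f (sigmoid y) := by
  have hderiv : ∀ y ∈ univ, HasDerivWithinAt sigmoid (sigmoid y * (1 - sigmoid y)) univ y :=
    fun y _ => (hasDerivAt_sigmoid y).hasDerivWithinAt
  rw [← range_sigmoid, ← image_univ, integral_image_eq_integral_abs_deriv_smul MeasurableSet.univ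
    hderiv sigmoid_injective.injOn, setIntegral_univ]
  congr with y
  rw [abs_of_pos (mul_pos (sigmoid_pos y) (sub_pos.2 (sigmoid_lt_one y)))]

theorem sigmoid_eq_exp_div_two_mul_cosh (y : ℝ) :
    sigmoid y = exp (y / 2) / (2 * cosh (y / 2)) := by
  rw [sigmoid_def, cosh_eq]
  field_simp
  rw [add_mul, one_mul, ← exp_add]
  ring_nf

theorem sigmoid_rpow_mul_one_sub_sigmoid_rpow (s y : ℝ) :
    sigmoid y ^ s * (1 - sigmoid y) ^ (1 - s) = exp ((s - 1 / 2) * y) / (2 * cosh (y / 2)) := by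
  have hC : 0 < 2 * cosh (y / 2) := by positivity
  rw [← sigmoid_neg, sigmoid_eq_exp_div_two_mul_cosh, sigmoid_eq_exp_div_two_mul_cosh, neg_div,
    cosh_neg, div_rpow (exp_pos _).le hC.le, div_rpow (exp_pos _).le hC.le, ← exp_mul, ← exp_mul,
    div_mul_div_comm, ← exp_add, ← rpow_add hC, add_sub_cancel, rpow_one]
  ring_nf

theorem integral_exp_mul_div_two_mul_cosh_half {a : ℝ} (ha : |a| < 1 / 2) :
    ∫ y, exp (a * y) / (2 * cosh (y / 2)) = π / cos (π * a) := by
  obtain ⟨ha₀, ha₁⟩ := abs_lt.1 ha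
  have hs₀ : 0 < a + 1 / 2 := by linarith
  have hs₁ : a + 1 / 2 < 1 := by linarith
  have hsin : sin (π * (a + 1 / 2)) = cos (π * a) := by
    rw [mul_add, mul_one_div, sin_add_pi_div_two]
  rw [← hsin, ← integral_Ioo_rpow_mul_one_sub_rpow_neg hs₀ hs₁,
    setIntegral_Ioo_zero_one_eq_integral_sigmoid]
  congr with y
  have hσ : 0 < sigmoid y := sigmoid_pos y
  have hσ' : 0 < 1 - sigmoid y := sub_pos.2 (sigmoid_lt_one y)
  have hs : (1 - (a + 1 / 2)) ≠ 0 := by linarith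
  rw [← add_sub_cancel_right a (1 / 2), ← sigmoid_rpow_mul_one_sub_sigmoid_rpow,
    add_sub_cancel_right, smul_eq_mul, rpow_sub_one hσ.ne', rpow_neg hσ'.le,
    rpow_one_sub' hσ'.le hs]
  field_simp

theorem integral_exp_sech (α : ℝ) (hα : |α| < Real.pi / 2) :
    ∫ x : ℝ, Real.exp (α * x) * (1 / (2 * Real.cosh (Real.pi * x / 2))) = 1 / Real.cos α := by
  have hπ : 0 < π := pi_pos
  have ha : |α / π| < 1 / 2 := by
    rwa [abs_div, abs_of_pos hπ, div_lt_iff₀ hπ, one_div_mul_eq_div]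
  calc ∫ x, exp (α * x) * (1 / (2 * cosh (π * x / 2)))
      = ∫ x, (fun y => exp (α / π * y) / (2 * cosh (y / 2))) (π * x) := by
        congr with x
        dsimp only
        rw [← mul_assoc, div_mul_cancel₀ α hπ.ne', mul_one_div]
    _ = π⁻¹ * (π / cos (π * (α / π))) := by
        rw [Measure.integral_comp_mul_left (fun y => exp (α / π * y) / (2 * cosh (y / 2))),
          integral_exp_mul_div_two_mul_cosh_half ha, abs_inv, abs_of_pos hπ, smul_eq_mul]
    _ = 1 / cos α := by
        rw [mul_div_cancel₀ α hπ.ne']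
        field_simp
end

section
/- For complex s, t in the open unit disc, cos(arctan s + arctan t)·√(1+s²)·√(1+t²) = 1 - s·t, where arctan z = (i/2)·log((1 - i z)/(1 + i z)) and the principal branches of log and square root are used. -/
/-! On the strip `|Im z| < 1` both `1 - i z` and `1 + i z` lie in the right half-plane, where the
principal logarithm is additive. Hence `√(1 + z²) = √(1 - i z) √(1 + i z)` and
`e^{± i arctan z} = √(1 ± i z) / √(1 ∓ i z)`, so `e^{± i arctan z} √(1 + z²) = 1 ± i z`.
Writing `cos` as the average of `e^{± i (arctan s + arctan t)}` gives
`((1 + i s)(1 + i t) + (1 - i s)(1 - i t)) / 2 = 1 - s t`. -/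

open Complex

noncomputable def arctanC (z : ℂ) : ℂ :=
  (Complex.I / 2) * Complex.log ((1 - Complex.I * z) / (1 + Complex.I * z))

namespace Complex

lemma log_mul_of_re_pos {x y : ℂ} (hx : 0 < x.re) (hy : 0 < y.re) :
    log (x * y) = log x + log y := by
  have hx' := abs_lt.mp (abs_arg_lt_pi_div_two_iff.mpr (Or.inl hx))
  have hy' := abs_lt.mp (abs_arg_lt_pi_div_two_iff.mpr (Or.inl hy))
  refine log_mul (ne_zero_of_re_pos hx) (ne_zero_of_re_pos hy) ⟨?_, ?_⟩ <;>
    linarith [Real.pi_pos]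

lemma log_div_of_re_pos {x y : ℂ} (hx : 0 < x.re) (hy : 0 < y.re) :
    log (x / y) = log x - log y := by
  have hy₀ := ne_zero_of_re_pos hy
  have hy_inv : 0 < y⁻¹.re := by
    rw [inv_re]; exact div_pos hy (normSq_pos.mpr hy₀)
  have hy_arg : y.arg ≠ Real.pi := by
    have := (abs_lt.mp (abs_arg_lt_pi_div_two_iff.mpr (Or.inl hy))).2
    linarith [Real.pi_pos]
  rw [div_eq_mul_inv, log_mul_of_re_pos hx hy_inv, log_inv y hy_arg, sub_eq_add_neg]

end Complex

section StripArctan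

variable {z : ℂ}

lemma re_one_sub_I_mul_pos (hz : |z.im| < 1) : 0 < (1 - I * z).re := by
  simp only [sub_re, one_re, mul_re, I_re, I_im, zero_mul, one_mul, zero_sub, sub_neg_eq_add]
  linarith [(abs_lt.mp hz).1]

lemma re_one_add_I_mul_pos (hz : |z.im| < 1) : 0 < (1 + I * z).re := by
  simp only [add_re, one_re, mul_re, I_re, I_im, zero_mul, one_mul, zero_sub]
  linarith [(abs_lt.mp hz).2]

lemma arctanC_mul_I (hz : |z.im| < 1) :
    arctanC z * I = (log (1 + I * z) - log (1 - I * z)) / 2 := by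
  rw [arctanC, log_div_of_re_pos (re_one_sub_I_mul_pos hz) (re_one_add_I_mul_pos hz)]
  linear_combination (log (1 - I * z) - log (1 + I * z)) / 2 * I_mul_I

lemma one_add_sq_cpow_half (hz : |z.im| < 1) :
    (1 + z ^ 2) ^ ((1 : ℂ) / 2) = exp ((log (1 - I * z) + log (1 + I * z)) / 2) := by
  have hfactor : 1 + z ^ 2 = (1 - I * z) * (1 + I * z) := by
    linear_combination z ^ 2 * I_mul_I
  have hsub := re_one_sub_I_mul_pos hz
  have hadd := re_one_add_I_mul_pos hz
  rw [hfactor, cpow_def_of_ne_zero (mul_ne_zero (ne_zero_of_re_pos hsub) (ne_zero_of_re_pos hadd)),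
    log_mul_of_re_pos hsub hadd, mul_one_div]

lemma exp_arctanC_mul_I_mul_cpow_half (hz : |z.im| < 1) :
    exp (arctanC z * I) * (1 + z ^ 2) ^ ((1 : ℂ) / 2) = 1 + I * z := by
  rw [arctanC_mul_I hz, one_add_sq_cpow_half hz, ← exp_add]
  convert exp_log (ne_zero_of_re_pos (re_one_add_I_mul_pos hz)) using 2
  ring

lemma exp_neg_arctanC_mul_I_mul_cpow_half (hz : |z.im| < 1) :
    exp (-(arctanC z * I)) * (1 + z ^ 2) ^ ((1 : ℂ) / 2) = 1 - I * z := by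
  rw [arctanC_mul_I hz, one_add_sq_cpow_half hz, ← exp_add]
  convert exp_log (ne_zero_of_re_pos (re_one_sub_I_mul_pos hz)) using 2
  ring

end StripArctan

theorem cos_arctan_add_arctan (s t : ℂ) (hs : ‖s‖ < 1) (ht : ‖t‖ < 1) :
    Complex.cos (arctanC s + arctanC t) *
      (1 + s ^ 2) ^ ((1 : ℂ) / 2) * (1 + t ^ 2) ^ ((1 : ℂ) / 2) = 1 - s * t := by
  have hs' : |s.im| < 1 := (abs_im_le_norm s).trans_lt hs
  have ht' : |t.im| < 1 := (abs_im_le_norm t).trans_lt ht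
  calc cos (arctanC s + arctanC t) * (1 + s ^ 2) ^ ((1 : ℂ) / 2) * (1 + t ^ 2) ^ ((1 : ℂ) / 2)
      = (exp (arctanC s * I) * (1 + s ^ 2) ^ ((1 : ℂ) / 2) *
            (exp (arctanC t * I) * (1 + t ^ 2) ^ ((1 : ℂ) / 2)) +
          exp (-(arctanC s * I)) * (1 + s ^ 2) ^ ((1 : ℂ) / 2) *
            (exp (-(arctanC t * I)) * (1 + t ^ 2) ^ ((1 : ℂ) / 2))) / 2 := by
        rw [cos, neg_mul, add_mul, neg_add, exp_add, exp_add]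
        ring
    _ = ((1 + I * s) * (1 + I * t) + (1 - I * s) * (1 - I * t)) / 2 := by
        rw [exp_arctanC_mul_I_mul_cpow_half hs', exp_arctanC_mul_I_mul_cpow_half ht',
          exp_neg_arctanC_mul_I_mul_cpow_half hs', exp_neg_arctanC_mul_I_mul_cpow_half ht']
    _ = 1 - s * t := by linear_combination s * t * I_mul_I
end

section
/- For any analytic function G(z) = Σ_{k≥0} a_k z^k on the open unit disc with real coefficients a_k, and any nonnegative measurable weight φ on (0,1), ∫_0^1 ∫_{D(0,1-ε)} |G'(z)|² dλ(z) φ(ε) dε = (π/2)·Σ_{k≥1} Γ_φ(k)·a_k², where Γ_φ(k) = 2k·∫_0^1 (1-ε)^{2k} φ(ε) dε and λ is Lebesgue measure on ℂ, with both sides possibly equal to +∞. -/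
/-!
On the circle of radius `ρ < 1`, `G'(ρ e^{iθ}) = Σ (k+1) a_{k+1} ρ^k e^{ikθ}` is an absolutely
convergent Fourier series, so Parseval's identity gives
`∫_{-π}^{π} |G'(ρ e^{iθ})|² dθ = 2π Σ (k+1)² a_{k+1}² ρ^{2k}`. Integrating against `ρ dρ` over
`(0, r)` (polar coordinates) gives `π Σ (k+1) a_{k+1}² r^{2k+2}` for the disc of radius `r`.
Everything is nonnegative, so in `[0, ∞]` the weighted integral over `ε` commutes with the sum
by monotone convergence.
-/

open MeasureTheory Metric
open Complex ComplexConjugate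
open scoped Real

section Fourier

variable {c : ℕ → ℂ}

lemma norm_exp_nat_mul_mul_I (k : ℕ) (θ : ℝ) : ‖exp (k * θ * I)‖ = 1 := by
  simpa using norm_exp_ofReal_mul_I (k * θ)

lemma integral_exp_int_mul_I (n : ℤ) :
    ∫ θ in (-π)..π, exp (n * θ * I) = if n = 0 then (2 * π : ℂ) else 0 := by
  split_ifs with hn
  · simp [hn]; ring
  have hnI : (n : ℂ) * I ≠ 0 := mul_ne_zero (by exact_mod_cast hn) I_ne_zero
  have hperiod : exp (n * I * π) = exp (n * I * (-π : ℝ)) := by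
    rw [show (n : ℂ) * I * π = n * I * (-π : ℝ) + n * (2 * π * I) by push_cast; ring,
      exp_add, exp_int_mul_two_pi_mul_I, mul_one]
  simp_rw [mul_right_comm _ _ I]
  rw [integral_exp_mul_complex hnI, hperiod, sub_self, zero_div]

lemma hasSum_integral_mul_tsum {g : ℝ → ℂ} (hg : Continuous g) (hc : Summable (‖c ·‖)) :
    HasSum (fun k : ℕ => c k * ∫ θ in (-π)..π, g θ * exp (k * θ * I))
      (∫ θ in (-π)..π, g θ * ∑' k : ℕ, c k * exp (k * θ * I)) := by
  obtain ⟨C, hC⟩ := (isCompact_uIcc (a := -π) (b := π)).exists_bound_of_continuousOn hg.continuousOn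
  simp_rw [← intervalIntegral.integral_const_mul, mul_left_comm (c _)]
  refine intervalIntegral.hasSum_integral_of_dominated_convergence (fun k _ => ‖c k‖ * C)
    (fun k => by fun_prop) (fun k => ae_of_all _ fun θ hθ => ?_)
    (ae_of_all _ fun _ _ => hc.mul_right C) intervalIntegrable_const
    (ae_of_all _ fun θ _ => ?_)
  · calc ‖g θ * (c k * exp (k * θ * I))‖ = ‖c k‖ * ‖g θ‖ := by
          rw [norm_mul, norm_mul, norm_exp_nat_mul_mul_I, mul_one, mul_comm]
      _ ≤ ‖c k‖ * C := by gcongr; exact hC θ (Set.uIoc_subset_uIcc hθ)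
  · refine (Summable.hasSum (.of_norm ?_)).mul_left (g θ)
    simpa [norm_exp_nat_mul_mul_I] using hc

lemma integral_exp_neg_mul_tsum (hc : Summable (‖c ·‖)) (n : ℕ) :
    ∫ θ in (-π)..π, exp (-(n * θ * I)) * ∑' k : ℕ, c k * exp (k * θ * I) = 2 * π * c n := by
  rw [← (hasSum_integral_mul_tsum (by fun_prop) hc).tsum_eq]
  have horth : ∀ k : ℕ, ∫ θ in (-π)..π, exp (-(n * θ * I)) * exp (k * θ * I) =
      if k = n then (2 * π : ℂ) else 0 := fun k => by
    have hmul : ∀ θ : ℝ, exp (-(n * θ * I)) * exp (k * θ * I) = exp (((k - n : ℤ) : ℂ) * θ * I) :=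
      fun θ => by rw [← exp_add]; push_cast; ring_nf
    simp_rw [hmul, integral_exp_int_mul_I, sub_eq_zero, Nat.cast_inj]
  simp_rw [horth, mul_ite, mul_zero]
  rw [tsum_ite_eq, mul_comm]

lemma continuous_tsum_mul_exp (hc : Summable (‖c ·‖)) :
    Continuous fun θ : ℝ => ∑' k : ℕ, c k * exp (k * θ * I) :=
  continuous_tsum (fun k => by fun_prop) hc
    (fun k θ => by rw [norm_mul, norm_exp_nat_mul_mul_I, mul_one])

theorem hasSum_integral_norm_sq_tsum_exp (hc : Summable (‖c ·‖)) :
    HasSum (fun k => 2 * π * ‖c k‖ ^ 2)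
      (∫ θ in (-π)..π, ‖∑' k : ℕ, c k * exp (k * θ * I)‖ ^ 2) := by
  set F : ℝ → ℂ := fun θ => ∑' k : ℕ, c k * exp (k * θ * I)
  -- `∫ |F|² = Σ c_k ∫ conj F · e_k`, and `∫ conj F · e_k` is the conjugate of
  -- the Fourier coefficient `∫ e_{-k} · F = 2π c_k`.
  have hcoeff : ∀ k : ℕ, ∫ θ in (-π)..π, conj (F θ) * exp (k * θ * I) = 2 * π * conj (c k) := by
    intro k
    have := congrArg conj (integral_exp_neg_mul_tsum hc k)
    rw [← intervalIntegral.intervalIntegral_conj] at this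
    simp only [map_mul, ← exp_conj, map_neg, map_natCast, conj_ofReal, conj_I, map_ofNat, mul_neg,
      neg_neg] at this
    simp_rw [mul_comm (conj _)]
    exact this
  have hsum : HasSum (fun k : ℕ => c k * ∫ θ in (-π)..π, conj (F θ) * exp (k * θ * I))
      (∫ θ in (-π)..π, conj (F θ) * F θ) :=
    hasSum_integral_mul_tsum (continuous_conj.comp (continuous_tsum_mul_exp hc)) hc
  simp only [hcoeff] at hsum
  refine Complex.hasSum_ofReal.mp ?_
  convert hsum using 1
  · ext k
    push_cast
    rw [mul_left_comm, mul_conj']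
  · simp_rw [conj_mul', ← ofReal_pow]
    exact intervalIntegral.integral_ofReal.symm

end Fourier

open Set in
lemma setLIntegral_ball_eq_polar (g : ℂ → ENNReal) (hg : Measurable g) (r : ℝ) :
    ∫⁻ z in ball (0 : ℂ) r, g z =
      ∫⁻ ρ in Ioo 0 r, ENNReal.ofReal ρ * ∫⁻ θ in Ioo (-π) π, g (circleMap 0 ρ θ) := by
  set S : Set (ℝ × ℝ) := Ioo 0 r ×ˢ Ioo (-π) π
  have hS : MeasurableSet S := measurableSet_Ioo.prod measurableSet_Ioo
  have hpolar : ∀ p ∈ polarCoord.target,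
      ENNReal.ofReal p.1 • (ball 0 r).indicator g (Complex.polarCoord.symm p) =
        S.indicator (fun p => ENNReal.ofReal p.1 * g (circleMap 0 p.1 p.2)) p := by
    rintro ⟨ρ, θ⟩ ⟨hρ, hθ⟩
    have hcirc : Complex.polarCoord.symm (ρ, θ) = circleMap 0 ρ θ := by
      simp [circleMap_zero, exp_mul_I]
    by_cases hρr : ρ < r
    · rw [hcirc, indicator_of_mem (by simpa [abs_of_pos hρ.out] using hρr),
        indicator_of_mem (show (ρ, θ) ∈ S from ⟨⟨hρ, hρr⟩, hθ⟩), smul_eq_mul]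
    · rw [hcirc, indicator_of_notMem (by simpa [abs_of_pos hρ.out] using hρr),
        indicator_of_notMem (fun h : (ρ, θ) ∈ S => hρr h.1.2), smul_zero]
  have hmeas : Measurable fun p : ℝ × ℝ => ENNReal.ofReal p.1 * g (circleMap 0 p.1 p.2) :=
    ENNReal.measurable_ofReal.comp measurable_fst |>.mul
      (hg.comp (by simp only [circleMap]; fun_prop))
  rw [← lintegral_indicator measurableSet_ball, ← Complex.lintegral_comp_polarCoord_symm,
    setLIntegral_congr_fun polarCoord.open_target.measurableSet hpolar,
    lintegral_indicator hS, Measure.restrict_restrict hS,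
    inter_eq_left.mpr (show S ⊆ polarCoord.target from prod_mono (fun _ h => h.1) subset_rfl),
    Measure.volume_eq_prod,
    setLIntegral_prod _ hmeas.aemeasurable]
  congr 1 with ρ
  exact lintegral_const_mul' _ _ ENNReal.ofReal_ne_top

lemma lintegral_Ioo_ofReal_pow {r : ℝ} (hr : 0 ≤ r) (n : ℕ) :
    ∫⁻ x in Set.Ioo 0 r, ENNReal.ofReal (x ^ n) = ENNReal.ofReal (r ^ (n + 1) / (n + 1)) := by
  rw [← ofReal_integral_eq_lintegral_ofReal, ← integral_Ioc_eq_integral_Ioo,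
    ← intervalIntegral.integral_of_le hr, integral_pow, zero_pow n.succ_ne_zero, sub_zero]
  · exact (continuous_pow n).integrableOn_Icc.mono_set Set.Ioo_subset_Icc_self
  · exact (ae_restrict_iff' measurableSet_Ioo).mpr (ae_of_all _ fun x hx => pow_nonneg hx.1.le n)

section PowerSeries

variable {f : ℂ → ℂ} {b : ℕ → ℂ} {R : ℝ}

open FormalMultilinearSeries in
lemma le_radius_ofScalars_of_hasSum
    (hf : ∀ z ∈ ball (0 : ℂ) R, HasSum (fun k => b k * z ^ k) (f z)) :
    ENNReal.ofReal R ≤ (ofScalars ℂ b).radius := by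
  refine ENNReal.le_of_forall_nnreal_lt fun r hr => (ofScalars ℂ b).le_radius_of_tendsto (l := 0) ?_
  have hr' : (r : ℝ) < R := by simpa using (ENNReal.coe_lt_ofReal).mp hr
  have := (hf r (by simpa using hr')).summable.tendsto_atTop_zero.norm
  simpa [ofScalars_norm] using this

lemma hasFPowerSeriesOnBall_ofScalars
    (hf : ∀ z ∈ ball (0 : ℂ) R, HasSum (fun k => b k * z ^ k) (f z)) (hR : 0 < R) :
    HasFPowerSeriesOnBall f (.ofScalars ℂ b) 0 (ENNReal.ofReal R) where
  r_le := le_radius_ofScalars_of_hasSum hf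
  r_pos := by simpa using hR
  hasSum {y} hy := by
    simpa [FormalMultilinearSeries.ofScalars_apply_eq, mul_comm] using hf y (by simpa using hy)

lemma summable_norm_mul_pow_of_hasSum
    (hf : ∀ z ∈ ball (0 : ℂ) R, HasSum (fun k => b k * z ^ k) (f z)) {ρ : ℝ} (hρ0 : 0 ≤ ρ)
    (hρ : ρ < R) : Summable fun k => ‖b k‖ * ρ ^ k := by
  have := (FormalMultilinearSeries.ofScalars ℂ b).summable_norm_mul_pow (r := ⟨ρ, hρ0⟩)
    ((ENNReal.coe_lt_ofReal.mpr hρ).trans_le (le_radius_ofScalars_of_hasSum hf))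
  simp only [FormalMultilinearSeries.ofScalars_norm] at this
  exact this

lemma hasSum_deriv_of_hasSum
    (hf : ∀ z ∈ ball (0 : ℂ) R, HasSum (fun k => b k * z ^ k) (f z)) :
    ∀ z ∈ ball (0 : ℂ) R, HasSum (fun k => ((k + 1) * b (k + 1)) * z ^ k) (deriv f z) := by
  intro z hz
  have hR : 0 < R := lt_of_le_of_lt (norm_nonneg z) (mem_ball_zero_iff.mp hz)
  have h := ((hasFPowerSeriesOnBall_ofScalars hf hR).fderiv.hasSum (y := z) (by simpa using hz))
  have := (ContinuousLinearMap.apply ℂ ℂ (1 : ℂ)).hasSum h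
  simpa [FormalMultilinearSeries.apply_eq_pow_smul_coeff, mul_comm] using this

lemma lintegral_norm_sq_circleMap
    (hf : ∀ z ∈ ball (0 : ℂ) R, HasSum (fun k => b k * z ^ k) (f z)) {ρ : ℝ} (hρ0 : 0 ≤ ρ)
    (hρ : ρ < R) :
    ∫⁻ θ in Set.Ioo (-π) π, ENNReal.ofReal (‖f (circleMap 0 ρ θ)‖ ^ 2) =
      ∑' k, ENNReal.ofReal (2 * π * ‖b k‖ ^ 2 * ρ ^ (2 * k)) := by
  set c : ℕ → ℂ := fun k => b k * ρ ^ k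
  have hc : Summable (‖c ·‖) := by
    simpa [c, abs_of_nonneg hρ0] using summable_norm_mul_pow_of_hasSum hf hρ0 hρ
  have hfc : ∀ θ : ℝ, f (circleMap 0 ρ θ) = ∑' k : ℕ, c k * exp (k * θ * I) := fun θ => by
    have hmem : circleMap 0 ρ θ ∈ ball (0 : ℂ) R := by simpa [abs_of_nonneg hρ0] using hρ
    rw [← (hf _ hmem).tsum_eq]
    refine tsum_congr fun k => ?_
    rw [circleMap_zero, mul_pow, ← exp_nat_mul, ← mul_assoc, ← mul_assoc]
  have hparseval := hasSum_integral_norm_sq_tsum_exp hc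
  simp_rw [hfc]
  rw [← ofReal_integral_eq_lintegral_ofReal, ← integral_Ioc_eq_integral_Ioo,
    ← intervalIntegral.integral_of_le (by linarith [Real.pi_pos]), hparseval.tsum_eq.symm,
    ENNReal.ofReal_tsum_of_nonneg (fun k => by positivity) hparseval.summable]
  · congr 1 with k
    simp [c, mul_pow, ← pow_mul', abs_of_nonneg hρ0, mul_assoc]
  · exact ((continuous_tsum_mul_exp hc).norm.pow 2).integrableOn_Icc.mono_set
      Set.Ioo_subset_Icc_self
  · exact ae_of_all _ fun θ => by positivity

theorem lintegral_ball_norm_sq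
    (hf : ∀ z ∈ ball (0 : ℂ) R, HasSum (fun k => b k * z ^ k) (f z)) (hf_meas : Measurable f)
    {r : ℝ} (hr0 : 0 ≤ r) (hrR : r ≤ R) :
    ∫⁻ z in ball (0 : ℂ) r, ENNReal.ofReal (‖f z‖ ^ 2) =
      ∑' k : ℕ, ENNReal.ofReal (π / (k + 1) * ‖b k‖ ^ 2 * r ^ (2 * (k + 1))) := by
  have hpolar : ∀ ρ ∈ Set.Ioo 0 r,
      ENNReal.ofReal ρ * ∫⁻ θ in Set.Ioo (-π) π, ENNReal.ofReal (‖f (circleMap 0 ρ θ)‖ ^ 2) =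
        ∑' k, ENNReal.ofReal (2 * π * ‖b k‖ ^ 2) * ENNReal.ofReal (ρ ^ (2 * k + 1)) := by
    intro ρ hρ
    rw [lintegral_norm_sq_circleMap hf hρ.1.le (hρ.2.trans_le hrR), ← ENNReal.tsum_mul_left]
    congr 1 with k
    rw [← ENNReal.ofReal_mul hρ.1.le, ← ENNReal.ofReal_mul (by positivity)]
    ring_nf
  rw [setLIntegral_ball_eq_polar _ (by fun_prop) r, setLIntegral_congr_fun measurableSet_Ioo hpolar,
    lintegral_tsum (fun k => by fun_prop)]
  congr 1 with k
  rw [lintegral_const_mul' _ _ ENNReal.ofReal_ne_top, lintegral_Ioo_ofReal_pow hr0,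
    ← ENNReal.ofReal_mul (by positivity)]
  congr 1
  push_cast
  field_simp
  ring

theorem lintegral_ball_norm_sq_deriv
    (hf : ∀ z ∈ ball (0 : ℂ) R, HasSum (fun k => b k * z ^ k) (f z))
    {r : ℝ} (hr0 : 0 ≤ r) (hrR : r ≤ R) :
    ∫⁻ z in ball (0 : ℂ) r, ENNReal.ofReal (‖deriv f z‖ ^ 2) =
      ∑' k : ℕ, ENNReal.ofReal (π * (k + 1) * ‖b (k + 1)‖ ^ 2 * r ^ (2 * (k + 1))) := by
  rw [lintegral_ball_norm_sq (hasSum_deriv_of_hasSum hf) (measurable_deriv f) hr0 hrR]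
  congr 1 with k
  have hnorm : ‖((k : ℂ) + 1) * b (k + 1)‖ = (k + 1) * ‖b (k + 1)‖ := by
    rw [norm_mul]
    norm_cast
  rw [hnorm]
  congr 1
  field_simp

end PowerSeries

theorem weighted_disc_integral (G : ℂ → ℂ) (a : ℕ → ℝ) (φ : ℝ → ENNReal)
    (hφ : Measurable φ)
    (hG : ∀ z ∈ Metric.ball (0 : ℂ) 1, HasSum (fun k : ℕ => (a k : ℂ) * z ^ k) (G z)) :
    ∫⁻ ε in Set.Ioo (0 : ℝ) 1,
        (∫⁻ z in Metric.ball (0 : ℂ) (1 - ε), ENNReal.ofReal (‖deriv G z‖ ^ 2)) * φ ε =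
      ENNReal.ofReal (Real.pi / 2) *
        ∑' k : ℕ,
          ((2 * (k + 1) : ENNReal) *
              ∫⁻ ε in Set.Ioo (0 : ℝ) 1,
                ENNReal.ofReal ((1 - ε) ^ (2 * (k + 1))) * φ ε) *
            ENNReal.ofReal (a (k + 1) ^ 2) := by
  have hcoeff : ∀ (k : ℕ) (x : ℝ), 0 ≤ x →
      ENNReal.ofReal (π * (k + 1) * ‖(a (k + 1) : ℂ)‖ ^ 2 * x) =
        ENNReal.ofReal (π / 2) * (2 * (k + 1)) * ENNReal.ofReal (a (k + 1) ^ 2) *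
          ENNReal.ofReal x := by
    intro k x hx
    have h2k : (2 * (k + 1) : ENNReal) = ENNReal.ofReal (2 * (k + 1)) := by
      rw [ENNReal.ofReal_mul zero_le_two, ENNReal.ofReal_ofNat]
      norm_cast
    rw [h2k, ← ENNReal.ofReal_mul (by positivity), ← ENNReal.ofReal_mul (by positivity),
      ← ENNReal.ofReal_mul (by positivity), norm_real, Real.norm_eq_abs, sq_abs]
    ring_nf
  have harea : ∀ ε ∈ Set.Ioo (0 : ℝ) 1,
      (∫⁻ z in ball (0 : ℂ) (1 - ε), ENNReal.ofReal (‖deriv G z‖ ^ 2)) * φ ε =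
        ∑' k : ℕ, ENNReal.ofReal (π / 2) * (2 * (k + 1)) * ENNReal.ofReal (a (k + 1) ^ 2) *
          (ENNReal.ofReal ((1 - ε) ^ (2 * (k + 1))) * φ ε) := fun ε hε => by
    rw [lintegral_ball_norm_sq_deriv hG (by linarith [hε.2]) (by linarith [hε.1]),
      ← ENNReal.tsum_mul_right]
    refine tsum_congr fun k => ?_
    rw [hcoeff k _ (pow_nonneg (by linarith [hε.2]) _), mul_assoc]
  rw [setLIntegral_congr_fun measurableSet_Ioo harea,
    lintegral_tsum (fun k => by fun_prop), ← ENNReal.tsum_mul_left]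
  congr 1 with k
  rw [lintegral_const_mul' _ _ (by finiteness)]
  ring
end

section
/- For any 0 < r < 1, the image under arctan of the open disc D(0,r) equals the set of points θ + iy with 2|θ| ≤ arccos(1/C_r) and |y| ≤ (1/2)·log(R_{θ,r}), where C_r = (1+r²)/(1-r²) and R_{θ,r} = C_r·cos(2θ) + √(C_r²·cos²(2θ) − 1); here arctan z = (i/2)·log((1−iz)/(1+iz)) with the principal branch of log, and ℂ is identified with ℝ². -/
open Real Complex

/-!
`arctanC` and `Complex.tan` are mutually inverse between the unit disc and the strip
`|Re ζ| < π / 4` (the Cayley image `(1 - iz) / (1 + iz)` of the disc is the right half-plane),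
so the image of the closed disc is the set of `ζ` in the strip with `‖tan ζ‖ ≤ r`.
Writing `ζ = x + iy`, `|sin ζ|² = (cosh 2y - cos 2x) / 2` and `|cos ζ|² = (cosh 2y + cos 2x) / 2`,
hence `‖tan ζ‖ ≤ r ↔ cosh 2y ≤ C_r cos 2x`. This splits into `1 / C_r ≤ cos 2x`, i.e.
`2|x| ≤ arccos (1 / C_r)`, and `|2y| ≤ arcosh (C_r cos 2x) = log R_{x,r}`.
-/

namespace Real

lemma le_cos_iff_abs_le_arccos {x c : ℝ} (hx : |x| ≤ π) (hc₀ : -1 ≤ c) (hc₁ : c ≤ 1) :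
    c ≤ cos x ↔ |x| ≤ arccos c := by
  rw [← cos_abs]
  constructor
  · intro h
    simpa only [arccos_cos (abs_nonneg x) hx] using arccos_le_arccos h
  · intro h
    simpa only [cos_arccos hc₀ hc₁] using
      cos_le_cos_of_nonneg_of_le_pi (abs_nonneg x) (arccos_le_pi c) h

lemma cosh_le_iff_abs_le_arcosh {t a : ℝ} : cosh t ≤ a ↔ 1 ≤ a ∧ |t| ≤ arcosh a := by
  constructor
  · intro h
    have ha : 1 ≤ a := (one_le_cosh t).trans h
    refine ⟨ha, ?_⟩
    rw [← arcosh_cosh (abs_nonneg t), cosh_abs]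
    exact (arcosh_le_arcosh (cosh_pos t) (by linarith)).2 h
  · rintro ⟨ha, h⟩
    rw [← cosh_arcosh ha, cosh_le_cosh]
    exact h.trans (le_abs_self _)

end Real

namespace Complex

lemma normSq_sin (z : ℂ) : normSq (sin z) = (Real.cosh (2 * z.im) - Real.cos (2 * z.re)) / 2 := by
  rw [sin_eq, ← ofReal_sin, ← ofReal_cos, ← ofReal_cosh, ← ofReal_sinh, ← ofReal_mul, ← ofReal_mul,
    normSq_add_mul_I, Real.cosh_two_mul, Real.cos_two_mul, mul_pow, mul_pow, Real.sin_sq,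
    Real.cosh_sq]
  ring

lemma normSq_cos (z : ℂ) : normSq (cos z) = (Real.cosh (2 * z.im) + Real.cos (2 * z.re)) / 2 := by
  rw [cos_eq, ← ofReal_sin, ← ofReal_cos, ← ofReal_cosh, ← ofReal_sinh, ← ofReal_mul, ← ofReal_mul,
    sub_eq_add_neg, ← neg_mul, ← ofReal_neg, normSq_add_mul_I, Real.cosh_two_mul,
    Real.cos_two_mul, neg_sq, mul_pow, mul_pow, Real.sin_sq, Real.cosh_sq]
  ring

lemma norm_tan_le_iff {z : ℂ} {r : ℝ} (hz : cos z ≠ 0) (hr : 0 ≤ r) :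
    ‖tan z‖ ≤ r ↔ (1 - r ^ 2) * Real.cosh (2 * z.im) ≤ (1 + r ^ 2) * Real.cos (2 * z.re) := by
  rw [← pow_le_pow_iff_left₀ (norm_nonneg _) hr two_ne_zero, Complex.sq_norm, tan, map_div₀,
    div_le_iff₀ (normSq_pos.2 hz), normSq_sin, normSq_cos]
  constructor <;> intro h <;> linarith

lemma re_one_sub_I_mul_div_one_add_I_mul_pos {z : ℂ} (hz : ‖z‖ < 1) :
    0 < ((1 - I * z) / (1 + I * z)).re := by
  have hden : 1 + I * z ≠ 0 := by
    intro h
    have : ‖I * z‖ = 1 := by rw [eq_neg_of_add_eq_zero_right h]; simp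
    simp [hz.ne] at this
  have hnum : (1 - I * z).re * (1 + I * z).re + (1 - I * z).im * (1 + I * z).im =
      1 - ‖z‖ ^ 2 := by
    simp only [Complex.sq_norm, normSq_apply, sub_re, sub_im, add_re, add_im, one_re, one_im,
      mul_re, mul_im, I_re, I_im]
    ring
  rw [div_re, ← add_div, hnum]
  exact div_pos (by nlinarith [norm_nonneg z]) (normSq_pos.2 hden)

end Complex

lemma arctanC_eq_arctan {z : ℂ} (hz : ‖z‖ < 1) : arctanC z = Complex.arctan z := by
  have hre := re_one_sub_I_mul_div_one_add_I_mul_pos hz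
  have harg : ((1 - I * z) / (1 + I * z)).arg ≠ π := fun h ↦ by
    linarith [(arg_eq_pi_iff.1 h).1]
  rw [arctanC, Complex.arctan, show (1 + z * I) / (1 - z * I) = ((1 - I * z) / (1 + I * z))⁻¹ by
    rw [inv_div]; ring_nf, log_inv _ harg]
  ring

lemma abs_re_arctanC_lt {z : ℂ} (hz : ‖z‖ < 1) : |(arctanC z).re| < π / 4 := by
  have harg := abs_arg_lt_pi_div_two_iff.2 (Or.inl (re_one_sub_I_mul_div_one_add_I_mul_pos hz))
  have : (arctanC z).re = -((1 - I * z) / (1 + I * z)).arg / 2 := by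
    simp only [arctanC, mul_re, div_ofNat_re, div_ofNat_im, I_re, I_im, log_im]
    ring
  rw [this, abs_div, abs_neg, abs_two]
  linarith

lemma arctanC_image_eq {S : Set ℂ} (hS : S ⊆ Metric.ball 0 1) :
    arctanC '' S = {ζ : ℂ | |ζ.re| < π / 4 ∧ Complex.tan ζ ∈ S} := by
  ext ζ
  constructor
  · rintro ⟨z, hz, rfl⟩
    have hz1 : ‖z‖ < 1 := mem_ball_zero_iff.1 (hS hz)
    have hzI : ∀ {w : ℂ}, ‖w‖ = 1 → z ≠ w := fun hw h ↦ by rw [h, hw] at hz1; exact hz1.false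
    refine ⟨abs_re_arctanC_lt hz1, ?_⟩
    rwa [arctanC_eq_arctan hz1, tan_arctan (hzI norm_I) (hzI (by simp))]
  · rintro ⟨hre, hS'⟩
    refine ⟨tan ζ, hS', ?_⟩
    have hπ := pi_pos
    obtain ⟨hre₀, hre₁⟩ := abs_lt.1 hre
    rw [arctanC_eq_arctan (mem_ball_zero_iff.1 (hS hS')), arctan_tan _ (by linarith) (by linarith)]
    rintro rfl
    norm_cast at hre₁
    linarith

lemma norm_tan_le_iff_of_abs_re_lt {ζ : ℂ} {r : ℝ} (hr : 0 ≤ r) (hr1 : r < 1)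
    (hζ : |ζ.re| < π / 4) :
    ‖Complex.tan ζ‖ ≤ r ↔ 2 * |ζ.re| ≤ arccos (1 / ((1 + r ^ 2) / (1 - r ^ 2))) ∧
      |ζ.im| ≤ 1 / 2 * arcosh ((1 + r ^ 2) / (1 - r ^ 2) * Real.cos (2 * ζ.re)) := by
  have hden : 0 < 1 - r ^ 2 := by nlinarith
  have hC : 0 < (1 + r ^ 2) / (1 - r ^ 2) := by positivity
  have hC1 : 1 / ((1 + r ^ 2) / (1 - r ^ 2)) ≤ 1 := by
    rw [div_le_one hC, le_div_iff₀ hden]; nlinarith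
  have hπ := pi_pos
  obtain ⟨hre₀, hre₁⟩ := abs_lt.1 hζ
  have hcos : cos ζ ≠ 0 := cos_ne_zero_of_arctan_bounds
    (fun h ↦ by rw [h] at hre₁; norm_cast at hre₁; linarith) (by linarith) (by linarith)
  have h2re : |2 * ζ.re| ≤ π := by rw [abs_mul, abs_two]; linarith
  rw [norm_tan_le_iff hcos hr, ← le_div_iff₀' hden, mul_div_right_comm, cosh_le_iff_abs_le_arcosh,
    ← div_le_iff₀' hC, le_cos_iff_abs_le_arccos h2re (by linarith [one_div_pos.2 hC]) hC1,
    abs_mul, abs_mul, abs_two]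
  constructor <;> rintro ⟨h₁, h₂⟩ <;> exact ⟨h₁, by linarith⟩

theorem arctan_image_closedBall (r : ℝ) (hr : 0 < r) (hr1 : r < 1) :
    arctanC '' Metric.closedBall (0 : ℂ) r =
      {z : ℂ |
        2 * |z.re| ≤ Real.arccos (1 / ((1 + r ^ 2) / (1 - r ^ 2))) ∧
        |z.im| ≤ (1 / 2) * Real.log
          (((1 + r ^ 2) / (1 - r ^ 2)) * Real.cos (2 * z.re) +
            Real.sqrt (((1 + r ^ 2) / (1 - r ^ 2)) ^ 2 * Real.cos (2 * z.re) ^ 2 - 1))} := by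
  ext ζ
  -- `Real.arcosh a` unfolds to `log (a + √(a ^ 2 - 1))`, the logarithm on the right-hand side.
  simp only [arctanC_image_eq (Metric.closedBall_subset_ball hr1), Set.mem_ofPred_eq,
    mem_closedBall_zero_iff, ← mul_pow]
  constructor
  · rintro ⟨hre, htan⟩
    exact (norm_tan_le_iff_of_abs_re_lt hr.le hr1 hre).1 htan
  · rintro ⟨hre, him⟩
    have hden : 0 < 1 - r ^ 2 := by nlinarith
    have hstrip : |ζ.re| < π / 4 := by
      have := arccos_lt_pi_div_two.2 (by positivity : 0 < 1 / ((1 + r ^ 2) / (1 - r ^ 2)))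
      linarith
    exact ⟨hstrip, (norm_tan_le_iff_of_abs_re_lt hr.le hr1 hstrip).2 ⟨hre, him⟩⟩
end

section
/- With φ(ε) = log²(ε) on (0,1), there exist universal constants c, C > 0 such that for all integers k ≥ 1, c·log²(e+k) ≤ Γ_φ(k) ≤ C·log²(e+k), where Γ_φ(k) = 2k·∫_0^1 (1−ε)^{2k} log²(ε) dε. -/
/-!
Near `ε = 0` the weight `(1 - ε) ^ n` is at least `1/2` on `(0, 1/(2n)]`, where
`log² ε ≥ log² (2n)`; this gives `n · ∫ ≥ log² (2n) / 4`. For the upper bound split at `δ = n⁻⁴`: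
below `δ` the weight is at most `1` and `log² ε ≤ 16 ε^(-1/2)` contributes `O(√δ) = O(n⁻²)`,
while above `δ` we have `log² ε ≤ log² δ = 16 log² n` and `∫ (1 - ε) ^ n = 1/(n+1)`.
-/

open Real MeasureTheory intervalIntegral Set

noncomputable def logSqMoment (n : ℕ) : ℝ := ∫ ε in (0 : ℝ)..1, (1 - ε) ^ n * log ε ^ 2

lemma sq_log_le_rpow {x : ℝ} (hx0 : 0 < x) (hx1 : x ≤ 1) :
    log x ^ 2 ≤ 16 * x ^ (-(1 / 2) : ℝ) := by
  have hlog : -log x ≤ 4 * x ^ (-(1 / 4) : ℝ) := by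
    have h := log_le_rpow_div (inv_nonneg.2 hx0.le) (by norm_num : (0 : ℝ) < 1 / 4)
    rw [log_inv, inv_rpow hx0.le, ← rpow_neg hx0.le] at h
    linarith
  have hnonneg : 0 ≤ -log x := neg_nonneg.2 (log_nonpos hx0.le hx1)
  calc log x ^ 2 = (-log x) ^ 2 := by ring
    _ ≤ (4 * x ^ (-(1 / 4) : ℝ)) ^ 2 := pow_le_pow_left₀ hnonneg hlog 2
    _ = 16 * x ^ (-(1 / 2) : ℝ) := by
      rw [mul_pow, ← rpow_mul_natCast hx0.le]; norm_num

lemma intervalIntegrable_one_sub_pow_mul_sq_log (n : ℕ) :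
    IntervalIntegrable (fun ε : ℝ => (1 - ε) ^ n * log ε ^ 2) volume 0 1 := by
  refine ((intervalIntegrable_rpow' (by norm_num : (-1 : ℝ) < -(1 / 2))).const_mul 16).mono_fun
    (by fun_prop) ?_
  rw [Filter.EventuallyLE, uIoc_of_le zero_le_one]
  refine ae_restrict_of_forall_mem measurableSet_Ioc fun x ⟨hx0, hx1⟩ => ?_
  have hweight : |(1 - x) ^ n| ≤ 1 := by
    rw [abs_pow]; exact pow_le_one₀ (abs_nonneg _) (abs_le.2 ⟨by linarith, by linarith⟩)
  rw [norm_mul, norm_of_nonneg (by positivity : (0 : ℝ) ≤ 16 * x ^ (-(1 / 2) : ℝ)),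
    norm_of_nonneg (sq_nonneg _), norm_eq_abs]
  calc |(1 - x) ^ n| * log x ^ 2 ≤ 1 * log x ^ 2 := by gcongr
    _ ≤ 16 * x ^ (-(1 / 2) : ℝ) := by rw [one_mul]; exact sq_log_le_rpow hx0 hx1

lemma integral_one_sub_pow (n : ℕ) : ∫ x in (0 : ℝ)..1, (1 - x) ^ n = 1 / (n + 1) := by
  rw [integral_comp_sub_left (fun x => x ^ n) 1]
  simp [integral_pow]

lemma mul_sq_log_div_two_le_logSqMoment (n : ℕ) {δ : ℝ} (hδ0 : 0 < δ) (hδ1 : δ ≤ 1)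
    (hnδ : n * δ ≤ 1 / 2) : δ * log δ ^ 2 / 2 ≤ logSqMoment n := by
  have hint := intervalIntegrable_one_sub_pow_mul_sq_log n
  have hpoint : ∀ x ∈ Ioo 0 δ, log δ ^ 2 / 2 ≤ (1 - x) ^ n * log x ^ 2 := by
    rintro x ⟨hx0, hxδ⟩
    have hweight : 1 / 2 ≤ (1 - x) ^ n := by
      have hbernoulli := one_add_mul_le_pow (by linarith : (-2 : ℝ) ≤ -x) n
      rw [← sub_eq_add_neg] at hbernoulli
      nlinarith [mul_le_mul_of_nonneg_left hxδ.le n.cast_nonneg]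
    have hlog : log δ ^ 2 ≤ log x ^ 2 := by
      have := log_le_log hx0 hxδ.le
      have := log_nonpos hδ0.le hδ1
      nlinarith
    nlinarith [sq_nonneg (log δ)]
  calc δ * log δ ^ 2 / 2 = ∫ _ in (0 : ℝ)..δ, log δ ^ 2 / 2 := by simp
    _ ≤ ∫ x in (0 : ℝ)..δ, (1 - x) ^ n * log x ^ 2 :=
      integral_mono_on_of_le_Ioo hδ0.le intervalIntegrable_const
        (hint.mono_set (uIcc_subset_uIcc_left (by simp [hδ0.le, hδ1]))) hpoint
    _ ≤ logSqMoment n := by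
      refine integral_mono_interval le_rfl hδ0.le hδ1 ?_ hint
      refine ae_restrict_of_forall_mem measurableSet_Ioc fun x hx => ?_
      exact mul_nonneg (pow_nonneg (by linarith [hx.2]) _) (sq_nonneg _)

lemma integral_rpow_neg_half (b : ℝ) :
    ∫ x in (0 : ℝ)..b, x ^ (-(1 / 2) : ℝ) = 2 * √b := by
  rw [integral_rpow (Or.inl (by norm_num)), sqrt_eq_rpow, zero_rpow (by norm_num)]
  norm_num
  ring

lemma logSqMoment_le (n : ℕ) {δ : ℝ} (hδ0 : 0 < δ) (hδ1 : δ ≤ 1) :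
    logSqMoment n ≤ 32 * √δ + log δ ^ 2 / (n + 1) := by
  have hint := intervalIntegrable_one_sub_pow_mul_sq_log n
  have hint_near := hint.mono_set (uIcc_subset_uIcc_left (x := δ) (by simp [hδ0.le, hδ1]))
  have hint_far := hint.mono_set (uIcc_subset_uIcc_right (x := δ) (by simp [hδ0.le, hδ1]))
  have hweight : Continuous fun x : ℝ => (1 - x) ^ n := by fun_prop
  have hnear : ∫ x in (0 : ℝ)..δ, (1 - x) ^ n * log x ^ 2 ≤ 32 * √δ := by
    calc ∫ x in (0 : ℝ)..δ, (1 - x) ^ n * log x ^ 2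
        ≤ ∫ x in (0 : ℝ)..δ, 16 * x ^ (-(1 / 2) : ℝ) := by
          refine integral_mono_on_of_le_Ioo hδ0.le hint_near
            ((intervalIntegrable_rpow' (by norm_num)).const_mul 16) fun x ⟨hx0, hxδ⟩ => ?_
          have hweight_le : (1 - x) ^ n ≤ 1 := pow_le_one₀ (by linarith) (by linarith)
          exact (mul_le_of_le_one_left (sq_nonneg _) hweight_le).trans
            (sq_log_le_rpow hx0 (hxδ.le.trans hδ1))
      _ = 32 * √δ := by rw [intervalIntegral.integral_const_mul, integral_rpow_neg_half]; ring
  have hfar : ∫ x in δ..1, (1 - x) ^ n * log x ^ 2 ≤ log δ ^ 2 / (n + 1) := by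
    calc ∫ x in δ..1, (1 - x) ^ n * log x ^ 2
        ≤ ∫ x in δ..1, (1 - x) ^ n * log δ ^ 2 := by
          refine integral_mono_on hδ1 hint_far
            ((hweight.mul continuous_const).intervalIntegrable _ _)
            fun x ⟨hδx, hx1⟩ => ?_
          have := log_le_log hδ0 hδx
          have := log_nonpos (hδ0.le.trans hδx) hx1
          gcongr (1 - x) ^ n * ?_
          nlinarith
      _ = (∫ x in δ..1, (1 - x) ^ n) * log δ ^ 2 := integral_mul_const _ _
      _ ≤ (∫ x in (0 : ℝ)..1, (1 - x) ^ n) * log δ ^ 2 := by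
          gcongr
          refine integral_mono_interval hδ0.le hδ1 le_rfl ?_ (hweight.intervalIntegrable _ _)
          exact ae_restrict_of_forall_mem measurableSet_Ioc fun x hx =>
            pow_nonneg (by linarith [hx.2]) _
      _ = log δ ^ 2 / (n + 1) := by rw [integral_one_sub_pow]; ring
  rw [logSqMoment, ← integral_add_adjacent_intervals hint_near hint_far]
  linarith

lemma sq_log_two_mul_div_four_le_mul_logSqMoment {n : ℕ} (hn : 1 ≤ n) :
    log (2 * n) ^ 2 / 4 ≤ n * logSqMoment n := by
  have hn' : (1 : ℝ) ≤ n := by exact_mod_cast hn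
  have h := mul_sq_log_div_two_le_logSqMoment n (δ := (2 * n)⁻¹) (by positivity)
    (inv_le_one_of_one_le₀ (by linarith)) (by field_simp; norm_num)
  rw [log_inv, neg_sq] at h
  calc log (2 * n) ^ 2 / 4 = n * ((2 * (n : ℝ))⁻¹ * log (2 * n) ^ 2 / 2) := by field_simp; ring
    _ ≤ n * logSqMoment n := by gcongr

lemma mul_logSqMoment_le {n : ℕ} (hn : 1 ≤ n) :
    n * logSqMoment n ≤ 32 / n + 16 * log n ^ 2 := by
  have hn' : (1 : ℝ) ≤ n := by exact_mod_cast hn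
  have h := logSqMoment_le n (δ := ((n : ℝ) ^ 4)⁻¹) (by positivity)
    (inv_le_one_of_one_le₀ (one_le_pow₀ hn'))
  have hsqrt : √(((n : ℝ) ^ 4)⁻¹) = ((n : ℝ) ^ 2)⁻¹ := by
    rw [show (n : ℝ) ^ 4 = ((n : ℝ) ^ 2) ^ 2 by ring, ← inv_pow, sqrt_sq (by positivity)]
  rw [hsqrt, log_inv, log_pow, neg_sq] at h
  calc (n : ℝ) * logSqMoment n
        ≤ n * (32 * ((n : ℝ) ^ 2)⁻¹ + (4 * log n) ^ 2 / (n + 1)) := by push_cast at h; gcongr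
    _ = 32 / n + n / (n + 1) * (16 * log n ^ 2) := by field_simp; ring
    _ ≤ 32 / n + 1 * (16 * log n ^ 2) := by
        gcongr; exact div_le_one_of_le₀ (by linarith) (by positivity)
    _ = 32 / n + 16 * log n ^ 2 := by ring

theorem Gamma_log_sq :
    ∃ c C : ℝ, 0 < c ∧ 0 < C ∧ ∀ k : ℕ, 1 ≤ k →
      c * Real.log (Real.exp 1 + k) ^ 2 ≤
          2 * k * ∫ ε in (0 : ℝ)..1, (1 - ε) ^ (2 * k) * Real.log ε ^ 2 ∧
        2 * k * ∫ ε in (0 : ℝ)..1, (1 - ε) ^ (2 * k) * Real.log ε ^ 2 ≤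
          C * Real.log (Real.exp 1 + k) ^ 2 := by
  refine ⟨1 / 4, 80, by norm_num, by norm_num, fun k hk => ?_⟩
  change 1 / 4 * _ ≤ 2 * k * logSqMoment (2 * k) ∧ 2 * k * logSqMoment (2 * k) ≤ 80 * _
  have hk' : (1 : ℝ) ≤ k := by exact_mod_cast hk
  have hlower := sq_log_two_mul_div_four_le_mul_logSqMoment (n := 2 * k) (by omega)
  have hupper := mul_logSqMoment_le (n := 2 * k) (by omega)
  push_cast at hlower hupper
  have he := exp_one_lt_d9
  have hL : 1 ≤ log (exp 1 + k) := by
    rw [le_log_iff_exp_le (by positivity)]; linarith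
  have hlog_le : log (exp 1 + k) ≤ log (2 * (2 * k)) := log_le_log (by positivity) (by linarith)
  have hlog_ge : log (2 * k) ≤ 2 * log (exp 1 + k) := by
    calc log (2 * k) ≤ log ((exp 1 + k) ^ 2) :=
          log_le_log (by positivity) (by nlinarith [add_one_le_exp (1 : ℝ)])
      _ = 2 * log (exp 1 + k) := by rw [log_pow]; norm_num
  have hlog_nonneg : 0 ≤ log (2 * k) := log_nonneg (by linarith)
  have hsmall : 32 / (2 * k : ℝ) ≤ 16 * log (exp 1 + k) ^ 2 := by
    rw [div_le_iff₀ (by positivity)]; nlinarith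
  constructor
  · calc 1 / 4 * log (exp 1 + k) ^ 2 ≤ log (2 * (2 * k)) ^ 2 / 4 := by
          have := pow_le_pow_left₀ (by linarith) hlog_le 2; linarith
      _ ≤ 2 * k * logSqMoment (2 * k) := hlower
  · calc 2 * k * logSqMoment (2 * k) ≤ 32 / (2 * k) + 16 * log (2 * k) ^ 2 := hupper
      _ ≤ 16 * log (exp 1 + k) ^ 2 + 16 * (2 * log (exp 1 + k)) ^ 2 := by gcongr
      _ = 80 * log (exp 1 + k) ^ 2 := by ring
end
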